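/- arXiv:1911.02633 — 9 statements merged into one kernel-verified Lean document; each statement's English description precedes it below -/
import Mathlib

section
/- Let G be a finite group, α a 3-cocycle on G with values in k^×, and N a normal subgroup of G. Then the function α^C(fN, gN, hN) = ∏_{x∈fN, y∈gN, z∈hN} α(x,y,z)^{|N|} is a 3-cocycle on the quotient group G/N with values in k^×. -/
/-- The function `α^𝒞(fN, gN, hN) = ∏_{x∈fN, y∈gN, z∈hN} α(x,y,z)^{|N|}`, viewed as a
function of coset representatives `f, g, h ∈ G`. -/
noncomputable def cosetCocycle {k : Type*} [Field k] {G : Type*} [Group G] [Fintype G]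
    (α : G → G → G → kˣ) (N : Subgroup G) [DecidablePred (· ∈ N)] (f g h : G) : kˣ :=
  (∏ x ∈ Finset.univ.filter (fun x => f⁻¹ * x ∈ N),
    ∏ y ∈ Finset.univ.filter (fun y => g⁻¹ * y ∈ N),
      ∏ z ∈ Finset.univ.filter (fun z => h⁻¹ * z ∈ N), α x y z) ^ (Nat.card N)

section Aux

variable {G : Type*} [Group G] [Fintype G] (N : Subgroup G) [DecidablePred (· ∈ N)]

private lemma filter_coset_eq {f f' : G} (h : f⁻¹ * f' ∈ N) :
    Finset.univ.filter (fun x => f⁻¹ * x ∈ N)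
      = Finset.univ.filter (fun x => f'⁻¹ * x ∈ N) := by
  ext x
  simp only [Finset.mem_filter, Finset.mem_univ, true_and]
  constructor
  · intro hx
    have h2 := N.mul_mem (N.inv_mem h) hx
    have : (f⁻¹ * f')⁻¹ * (f⁻¹ * x) = f'⁻¹ * x := by group
    rwa [this] at h2
  · intro hx
    have h2 := N.mul_mem h hx
    have : (f⁻¹ * f') * (f'⁻¹ * x) = f⁻¹ * x := by group
    rwa [this] at h2

private lemma card_filter_coset (f : G) :
    (Finset.univ.filter (fun x => f⁻¹ * x ∈ N)).card = Nat.card N := by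
  rw [Nat.card_eq_fintype_card, Fintype.card_subtype]
  apply Finset.card_bij (fun x _ => f⁻¹ * x)
  · intro a ha
    simp only [Finset.mem_filter, Finset.mem_univ, true_and] at ha ⊢
    exact ha
  · intro a _ b _ hab
    exact mul_left_cancel hab
  · intro b hb
    refine ⟨f * b, ?_, by group⟩
    simp only [Finset.mem_filter, Finset.mem_univ, true_and] at hb ⊢
    rwa [inv_mul_cancel_left]

private lemma prod_translate [Nrm : N.Normal] {M : Type*} [CommMonoid M] {f g x : G}
    (hx : f⁻¹ * x ∈ N) (F : G → M) :
    ∏ y ∈ Finset.univ.filter (fun y => g⁻¹ * y ∈ N), F (x * y)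
      = ∏ u ∈ Finset.univ.filter (fun u => (f * g)⁻¹ * u ∈ N), F u := by
  apply Finset.prod_nbij' (fun y => x * y) (fun u => x⁻¹ * u)
  · intro y hy
    simp only [Finset.mem_filter, Finset.mem_univ, true_and] at hy ⊢
    have h1 : g⁻¹ * (f⁻¹ * x) * g ∈ N := by
      have := Nrm.conj_mem _ hx g⁻¹
      rwa [inv_inv] at this
    have h2 := N.mul_mem h1 hy
    have : (g⁻¹ * (f⁻¹ * x) * g) * (g⁻¹ * y) = (f * g)⁻¹ * (x * y) := by group
    rwa [this] at h2
  · intro u hu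
    simp only [Finset.mem_filter, Finset.mem_univ, true_and] at hu ⊢
    have h1 : g⁻¹ * (f⁻¹ * x)⁻¹ * g ∈ N := by
      have := Nrm.conj_mem _ (N.inv_mem hx) g⁻¹
      rwa [inv_inv] at this
    have h2 := N.mul_mem h1 hu
    have : (g⁻¹ * (f⁻¹ * x)⁻¹ * g) * ((f * g)⁻¹ * u) = g⁻¹ * (x⁻¹ * u) := by group
    rwa [this] at h2
  · intro y _; group
  · intro u _; group
  · intro y _; rfl

end Aux

/-- If `α` is a 3-cocycle on a finite group `G` and `N ⊴ G`, then
`α^𝒞(fN,gN,hN) = ∏_{x∈fN,y∈gN,z∈hN} α(x,y,z)^{|N|}` is a well-defined 3-cocycle on `G/N`: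
it is constant on cosets and satisfies the 3-cocycle identity. -/
theorem cosetCocycle_is_cocycle {k : Type*} [Field k] [IsAlgClosed k] [CharZero k]
    {G : Type*} [Group G] [Fintype G]
    (α : G → G → G → kˣ)
    (hα : ∀ g₀ g₁ g₂ g₃ : G,
      α g₁ g₂ g₃ * (α (g₀ * g₁) g₂ g₃)⁻¹ * α g₀ (g₁ * g₂) g₃ *
        (α g₀ g₁ (g₂ * g₃))⁻¹ * α g₀ g₁ g₂ = 1)
    (N : Subgroup G) [N.Normal] [DecidablePred (· ∈ N)] :
    (∀ f f' g g' h h' : G, f⁻¹ * f' ∈ N → g⁻¹ * g' ∈ N → h⁻¹ * h' ∈ N →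
      cosetCocycle α N f g h = cosetCocycle α N f' g' h') ∧
    (∀ f g h i : G,
      cosetCocycle α N g h i * (cosetCocycle α N (f * g) h i)⁻¹ *
        cosetCocycle α N f (g * h) i * (cosetCocycle α N f g (h * i))⁻¹ *
        cosetCocycle α N f g h = 1) := by
  constructor
  · intro f f' g g' h h' hf hg hh
    unfold cosetCocycle
    rw [filter_coset_eq N hf]
    simp only [filter_coset_eq N hg, filter_coset_eq N hh]
  · intro f g h i
    set Sf := Finset.univ.filter (fun x => f⁻¹ * x ∈ N) with hSf
    set Sg := Finset.univ.filter (fun y => g⁻¹ * y ∈ N) with hSg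
    set Sh := Finset.univ.filter (fun z => h⁻¹ * z ∈ N) with hSh
    set Si := Finset.univ.filter (fun w => i⁻¹ * w ∈ N) with hSi
    set Sfg := Finset.univ.filter (fun u => (f * g)⁻¹ * u ∈ N) with hSfg
    set Sgh := Finset.univ.filter (fun v => (g * h)⁻¹ * v ∈ N) with hSgh
    set Shi := Finset.univ.filter (fun u => (h * i)⁻¹ * u ∈ N) with hShi
    have key : (∏ x ∈ Sf, ∏ y ∈ Sg, ∏ z ∈ Sh, ∏ w ∈ Si,
        (α y z w * (α (x * y) z w)⁻¹ * α x (y * z) w * (α x y (z * w))⁻¹ * α x y z))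
        = (1 : kˣ) := by
      refine Finset.prod_eq_one fun x _ => Finset.prod_eq_one fun y _ =>
        Finset.prod_eq_one fun z _ => Finset.prod_eq_one fun w _ => hα x y z w
    have hA : ∏ x ∈ Sf, ∏ y ∈ Sg, ∏ z ∈ Sh, ∏ w ∈ Si, α y z w
        = cosetCocycle α N g h i := by
      rw [Finset.prod_const, hSf, card_filter_coset]
      rfl
    have hB : ∏ x ∈ Sf, ∏ y ∈ Sg, ∏ z ∈ Sh, ∏ w ∈ Si, α (x * y) z w
        = cosetCocycle α N (f * g) h i := by
      rw [Finset.prod_congr rfl (fun x hx => prod_translate N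
            (by rw [hSf] at hx; exact (Finset.mem_filter.mp hx).2)
            (fun u => ∏ z ∈ Sh, ∏ w ∈ Si, α u z w)),
          Finset.prod_const, hSf, card_filter_coset]
      rfl
    have hC : ∏ x ∈ Sf, ∏ y ∈ Sg, ∏ z ∈ Sh, ∏ w ∈ Si, α x (y * z) w
        = cosetCocycle α N f (g * h) i := by
      have step : ∀ x, ∏ y ∈ Sg, ∏ z ∈ Sh, ∏ w ∈ Si, α x (y * z) w
          = (∏ v ∈ Sgh, ∏ w ∈ Si, α x v w) ^ Nat.card N := by
        intro x
        rw [Finset.prod_congr rfl (fun y hy => prod_translate N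
              (by rw [hSg] at hy; exact (Finset.mem_filter.mp hy).2)
              (fun v => ∏ w ∈ Si, α x v w)),
            Finset.prod_const, hSg, card_filter_coset]
      simp only [step, Finset.prod_pow]
      rfl
    have hD : ∏ x ∈ Sf, ∏ y ∈ Sg, ∏ z ∈ Sh, ∏ w ∈ Si, α x y (z * w)
        = cosetCocycle α N f g (h * i) := by
      have step : ∀ x y, ∏ z ∈ Sh, ∏ w ∈ Si, α x y (z * w)
          = (∏ u ∈ Shi, α x y u) ^ Nat.card N := by
        intro x y
        rw [Finset.prod_congr rfl (fun z hz => prod_translate N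
              (by rw [hSh] at hz; exact (Finset.mem_filter.mp hz).2)
              (fun u => α x y u)),
            Finset.prod_const, hSh, card_filter_coset]
      simp only [step, Finset.prod_pow]
      rfl
    have hE : ∏ x ∈ Sf, ∏ y ∈ Sg, ∏ z ∈ Sh, ∏ w ∈ Si, α x y z
        = cosetCocycle α N f g h := by
      simp only [Finset.prod_const, hSi, card_filter_coset, Finset.prod_pow]
      rfl
    calc cosetCocycle α N g h i * (cosetCocycle α N (f * g) h i)⁻¹ *
          cosetCocycle α N f (g * h) i * (cosetCocycle α N f g (h * i))⁻¹ *
          cosetCocycle α N f g h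
        = (∏ x ∈ Sf, ∏ y ∈ Sg, ∏ z ∈ Sh, ∏ w ∈ Si, α y z w) *
          (∏ x ∈ Sf, ∏ y ∈ Sg, ∏ z ∈ Sh, ∏ w ∈ Si, α (x * y) z w)⁻¹ *
          (∏ x ∈ Sf, ∏ y ∈ Sg, ∏ z ∈ Sh, ∏ w ∈ Si, α x (y * z) w) *
          (∏ x ∈ Sf, ∏ y ∈ Sg, ∏ z ∈ Sh, ∏ w ∈ Si, α x y (z * w))⁻¹ *
          (∏ x ∈ Sf, ∏ y ∈ Sg, ∏ z ∈ Sh, ∏ w ∈ Si, α x y z) := by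
            rw [hA, hB, hC, hD, hE]
      _ = ∏ x ∈ Sf, ∏ y ∈ Sg, ∏ z ∈ Sh, ∏ w ∈ Si,
            (α y z w * (α (x * y) z w)⁻¹ * α x (y * z) w * (α x y (z * w))⁻¹ * α x y z) := by
            simp only [Finset.prod_mul_distrib, Finset.prod_inv_distrib]
      _ = 1 := key
end

section
/- The map sending the cohomology class of a 3-cocycle α ∈ Z^3(G, k^×) to the class of the 3-cocycle (fN, gN, hN) ↦ ∏_{x∈fN, y∈gN, z∈hN} α(x,y,z)^{|N|} on G/N is a well-defined group homomorphism H^3(G, k^×) → H^3(G/N, k^×). -/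
section aux
variable {G : Type*} [Group G] [Fintype G] (N : Subgroup G) [DecidablePred (· ∈ N)]

lemma filterCoset_congr {f f' : G} (h : f⁻¹ * f' ∈ N) :
    (Finset.univ.filter fun x => f⁻¹ * x ∈ N) =
      Finset.univ.filter fun x => f'⁻¹ * x ∈ N := by
  ext x
  simp only [Finset.mem_filter, Finset.mem_univ, true_and]
  constructor
  · intro hx
    have e : f'⁻¹ * x = (f⁻¹ * f')⁻¹ * (f⁻¹ * x) := by group
    rw [e]; exact N.mul_mem (N.inv_mem h) hx
  · intro hx
    have e : f⁻¹ * x = (f⁻¹ * f') * (f'⁻¹ * x) := by group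
    rw [e]; exact N.mul_mem h hx

lemma card_filterCoset (f : G) :
    (Finset.univ.filter fun x => f⁻¹ * x ∈ N).card = Nat.card N :=
  calc (Finset.univ.filter fun x => f⁻¹ * x ∈ N).card
      = Fintype.card {x : G // f⁻¹ * x ∈ N} := (Fintype.card_subtype _).symm
    _ = Nat.card {x : G // f⁻¹ * x ∈ N} := (Nat.card_eq_fintype_card).symm
    _ = Nat.card N := Nat.card_congr ((Equiv.mulLeft f⁻¹).subtypeEquiv fun _ => Iff.rfl)

lemma prod_filterCoset_translate {M : Type*} [CommMonoid M] [hN : N.Normal] {f x0 : G}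
    (hx0 : f⁻¹ * x0 ∈ N) (g : G) (F : G → M) :
    (∏ y ∈ Finset.univ.filter fun y => g⁻¹ * y ∈ N, F (x0 * y))
      = ∏ w ∈ Finset.univ.filter fun w => (f * g)⁻¹ * w ∈ N, F w := by
  refine Finset.prod_nbij' (fun y => x0 * y) (fun w => x0⁻¹ * w) ?_ ?_ ?_ ?_ ?_
  · intro y hy
    simp only [Finset.mem_filter, Finset.mem_univ, true_and] at hy ⊢
    have e : (f * g)⁻¹ * (x0 * y) = (g⁻¹ * (f⁻¹ * x0) * g⁻¹⁻¹) * (g⁻¹ * y) := by group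
    rw [e]; exact N.mul_mem (hN.conj_mem _ hx0 g⁻¹) hy
  · intro w hw
    simp only [Finset.mem_filter, Finset.mem_univ, true_and] at hw ⊢
    have e : g⁻¹ * (x0⁻¹ * w) = (g⁻¹ * (f⁻¹ * x0)⁻¹ * g⁻¹⁻¹) * ((f * g)⁻¹ * w) := by group
    rw [e]; exact N.mul_mem (hN.conj_mem _ (N.inv_mem hx0) g⁻¹) hw
  · intro y _; simp
  · intro w _; simp
  · intro y _; rfl

lemma prod_shift_pow {M : Type*} [CommMonoid M] [N.Normal] (f g : G) (F : G → M) :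
    (∏ x ∈ Finset.univ.filter fun x => f⁻¹ * x ∈ N,
      ∏ y ∈ Finset.univ.filter fun y => g⁻¹ * y ∈ N, F (x * y))
      = (∏ w ∈ Finset.univ.filter fun w => (f * g)⁻¹ * w ∈ N, F w) ^ Nat.card N := by
  rw [Finset.prod_congr rfl fun x hx => prod_filterCoset_translate N
      (Finset.mem_filter.mp hx).2 g F]
  rw [Finset.prod_const, card_filterCoset]

end aux

/-- The assignment `α ↦ α^𝒞` induces a well-defined group homomorphism
`H³(G, kˣ) → H³(G/N, kˣ)`: it is multiplicative, it sends cocycles to cocycles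
(constant on cosets, i.e. defined on `G/N`), and it sends coboundaries to coboundaries. -/
theorem cosetCocycle_induces_cohomology_hom {k : Type*} [Field k] [IsAlgClosed k] [CharZero k]
    {G : Type*} [Group G] [Fintype G]
    (N : Subgroup G) [N.Normal] [DecidablePred (· ∈ N)] :
    -- multiplicativity
    (∀ α α' : G → G → G → kˣ, ∀ f g h : G,
      cosetCocycle (fun x y z => α x y z * α' x y z) N f g h =
        cosetCocycle α N f g h * cosetCocycle α' N f g h) ∧
    -- cocycles are sent to well-defined cocycles on the quotient
    (∀ α : G → G → G → kˣ,
      (∀ g₀ g₁ g₂ g₃ : G,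
        α g₁ g₂ g₃ * (α (g₀ * g₁) g₂ g₃)⁻¹ * α g₀ (g₁ * g₂) g₃ *
          (α g₀ g₁ (g₂ * g₃))⁻¹ * α g₀ g₁ g₂ = 1) →
      (∀ f f' g g' h h' : G, f⁻¹ * f' ∈ N → g⁻¹ * g' ∈ N → h⁻¹ * h' ∈ N →
        cosetCocycle α N f g h = cosetCocycle α N f' g' h') ∧
      (∀ f g h i : G,
        cosetCocycle α N g h i * (cosetCocycle α N (f * g) h i)⁻¹ *
          cosetCocycle α N f (g * h) i * (cosetCocycle α N f g (h * i))⁻¹ *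
          cosetCocycle α N f g h = 1)) ∧
    -- cohomologous cocycles are sent to cohomologous cocycles
    (∀ α α' : G → G → G → kˣ, ∀ r : G → G → kˣ,
      (∀ f g h : G,
        α' f g h = α f g h * (r g h * (r (f * g) h)⁻¹ * r f (g * h) * (r f g)⁻¹)) →
      ∃ s : G → G → kˣ,
        (∀ f f' g g' : G, f⁻¹ * f' ∈ N → g⁻¹ * g' ∈ N → s f g = s f' g') ∧
        (∀ f g h : G,
          cosetCocycle α' N f g h =
            cosetCocycle α N f g h *
              (s g h * (s (f * g) h)⁻¹ * s f (g * h) * (s f g)⁻¹))) := by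
  have hmul : ∀ α α' : G → G → G → kˣ, ∀ f g h : G,
      cosetCocycle (fun x y z => α x y z * α' x y z) N f g h =
        cosetCocycle α N f g h * cosetCocycle α' N f g h := by
    intro α α' f g h
    simp only [cosetCocycle, Finset.prod_mul_distrib, mul_pow]
  refine ⟨hmul, ?_, ?_⟩
  · intro α hα
    constructor
    · intro f f' g g' h h' hf hg hh
      simp only [cosetCocycle, filterCoset_congr N hf, filterCoset_congr N hg,
        filterCoset_congr N hh]
    · intro f g h i
      have key : (∏ x0 ∈ Finset.univ.filter fun x => f⁻¹ * x ∈ N,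
          ∏ x1 ∈ Finset.univ.filter fun x => g⁻¹ * x ∈ N,
          ∏ x2 ∈ Finset.univ.filter fun x => h⁻¹ * x ∈ N,
          ∏ x3 ∈ Finset.univ.filter fun x => i⁻¹ * x ∈ N,
          (α x1 x2 x3 * (α (x0 * x1) x2 x3)⁻¹ * α x0 (x1 * x2) x3 *
            (α x0 x1 (x2 * x3))⁻¹ * α x0 x1 x2)) = 1 := by
        simp only [hα, Finset.prod_const_one]
      simp only [Finset.prod_mul_distrib, Finset.prod_inv_distrib] at key
      have hA : (∏ x0 ∈ Finset.univ.filter fun x => f⁻¹ * x ∈ N,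
          ∏ x1 ∈ Finset.univ.filter fun x => g⁻¹ * x ∈ N,
          ∏ x2 ∈ Finset.univ.filter fun x => h⁻¹ * x ∈ N,
          ∏ x3 ∈ Finset.univ.filter fun x => i⁻¹ * x ∈ N, α x1 x2 x3)
          = cosetCocycle α N g h i := by
        rw [Finset.prod_const, card_filterCoset]; rfl
      have hB : (∏ x0 ∈ Finset.univ.filter fun x => f⁻¹ * x ∈ N,
          ∏ x1 ∈ Finset.univ.filter fun x => g⁻¹ * x ∈ N,
          ∏ x2 ∈ Finset.univ.filter fun x => h⁻¹ * x ∈ N,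
          ∏ x3 ∈ Finset.univ.filter fun x => i⁻¹ * x ∈ N, α (x0 * x1) x2 x3)
          = cosetCocycle α N (f * g) h i := by
        rw [cosetCocycle]
        exact prod_shift_pow N f g (fun w =>
          ∏ x2 ∈ Finset.univ.filter fun x => h⁻¹ * x ∈ N,
          ∏ x3 ∈ Finset.univ.filter fun x => i⁻¹ * x ∈ N, α w x2 x3)
      have hC : (∏ x0 ∈ Finset.univ.filter fun x => f⁻¹ * x ∈ N,
          ∏ x1 ∈ Finset.univ.filter fun x => g⁻¹ * x ∈ N,
          ∏ x2 ∈ Finset.univ.filter fun x => h⁻¹ * x ∈ N,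
          ∏ x3 ∈ Finset.univ.filter fun x => i⁻¹ * x ∈ N, α x0 (x1 * x2) x3)
          = cosetCocycle α N f (g * h) i := by
        rw [Finset.prod_congr rfl fun x0 _ => prod_shift_pow N g h (fun w =>
          ∏ x3 ∈ Finset.univ.filter fun x => i⁻¹ * x ∈ N, α x0 w x3)]
        rw [Finset.prod_pow]; rfl
      have hD : (∏ x0 ∈ Finset.univ.filter fun x => f⁻¹ * x ∈ N,
          ∏ x1 ∈ Finset.univ.filter fun x => g⁻¹ * x ∈ N,
          ∏ x2 ∈ Finset.univ.filter fun x => h⁻¹ * x ∈ N,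
          ∏ x3 ∈ Finset.univ.filter fun x => i⁻¹ * x ∈ N, α x0 x1 (x2 * x3))
          = cosetCocycle α N f g (h * i) := by
        rw [Finset.prod_congr rfl fun x0 _ => Finset.prod_congr rfl fun x1 _ =>
          prod_shift_pow N h i (α x0 x1)]
        simp only [Finset.prod_pow]; rfl
      have hE : (∏ x0 ∈ Finset.univ.filter fun x => f⁻¹ * x ∈ N,
          ∏ x1 ∈ Finset.univ.filter fun x => g⁻¹ * x ∈ N,
          ∏ x2 ∈ Finset.univ.filter fun x => h⁻¹ * x ∈ N,
          ∏ x3 ∈ Finset.univ.filter fun x => i⁻¹ * x ∈ N, α x0 x1 x2)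
          = cosetCocycle α N f g h := by
        simp only [Finset.prod_const, card_filterCoset, Finset.prod_pow]; rfl
      rw [hA, hB, hC, hD, hE] at key
      exact key
  · intro α α' r hr
    refine ⟨fun f g => (∏ x ∈ Finset.univ.filter fun x => f⁻¹ * x ∈ N,
        ∏ y ∈ Finset.univ.filter fun y => g⁻¹ * y ∈ N, r x y) ^ (Nat.card N * Nat.card N),
      ?_, ?_⟩
    · intro f f' g g' hf hg
      simp only [filterCoset_congr N hf, filterCoset_congr N hg]
    · intro f g h
      have e1 : cosetCocycle α' N f g h = cosetCocycle α N f g h *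
          cosetCocycle (fun x y z =>
            r y z * (r (x * y) z)⁻¹ * r x (y * z) * (r x y)⁻¹) N f g h := by
        have hα' : α' = fun x y z => α x y z *
            (r y z * (r (x * y) z)⁻¹ * r x (y * z) * (r x y)⁻¹) :=
          funext fun x => funext fun y => funext fun z => hr x y z
        rw [hα']
        exact hmul α _ f g h
      rw [e1]
      congr 1
      have hA : (∏ x ∈ Finset.univ.filter fun x => f⁻¹ * x ∈ N,
          ∏ y ∈ Finset.univ.filter fun y => g⁻¹ * y ∈ N,
          ∏ z ∈ Finset.univ.filter fun z => h⁻¹ * z ∈ N, r y z)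
          = (∏ y ∈ Finset.univ.filter fun y => g⁻¹ * y ∈ N,
             ∏ z ∈ Finset.univ.filter fun z => h⁻¹ * z ∈ N, r y z) ^ Nat.card N := by
        rw [Finset.prod_const, card_filterCoset]
      have hB : (∏ x ∈ Finset.univ.filter fun x => f⁻¹ * x ∈ N,
          ∏ y ∈ Finset.univ.filter fun y => g⁻¹ * y ∈ N,
          ∏ z ∈ Finset.univ.filter fun z => h⁻¹ * z ∈ N, r (x * y) z)
          = (∏ w ∈ Finset.univ.filter fun w => (f * g)⁻¹ * w ∈ N,
             ∏ z ∈ Finset.univ.filter fun z => h⁻¹ * z ∈ N, r w z) ^ Nat.card N :=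
        prod_shift_pow N f g (fun w =>
          ∏ z ∈ Finset.univ.filter fun z => h⁻¹ * z ∈ N, r w z)
      have hC : (∏ x ∈ Finset.univ.filter fun x => f⁻¹ * x ∈ N,
          ∏ y ∈ Finset.univ.filter fun y => g⁻¹ * y ∈ N,
          ∏ z ∈ Finset.univ.filter fun z => h⁻¹ * z ∈ N, r x (y * z))
          = (∏ x ∈ Finset.univ.filter fun x => f⁻¹ * x ∈ N,
             ∏ w ∈ Finset.univ.filter fun w => (g * h)⁻¹ * w ∈ N, r x w) ^ Nat.card N := by
        rw [Finset.prod_congr rfl fun x _ => prod_shift_pow N g h (r x)]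
        rw [Finset.prod_pow]
      have hD : (∏ x ∈ Finset.univ.filter fun x => f⁻¹ * x ∈ N,
          ∏ y ∈ Finset.univ.filter fun y => g⁻¹ * y ∈ N,
          ∏ z ∈ Finset.univ.filter fun z => h⁻¹ * z ∈ N, r x y)
          = (∏ x ∈ Finset.univ.filter fun x => f⁻¹ * x ∈ N,
             ∏ y ∈ Finset.univ.filter fun y => g⁻¹ * y ∈ N, r x y) ^ Nat.card N := by
        simp only [Finset.prod_const, card_filterCoset, Finset.prod_pow]
      simp only [cosetCocycle, Finset.prod_mul_distrib, Finset.prod_inv_distrib]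
      rw [hA, hB, hC, hD]
      simp only [mul_pow, inv_pow, pow_mul]
end

section
/- Let G be a finite group and α ∈ Z^3(G, k^×) a 3-cocycle. Define μ_g(y,z) = α(gyg⁻¹, gzg⁻¹, g)·α(g,y,z) / α(gyg⁻¹, g, z). Then for all x,y,z,g ∈ G: μ_g(xy,z)·μ_g(x,y) / (μ_g(x,yz)·μ_g(y,z)) = α(gxg⁻¹, gyg⁻¹, gzg⁻¹) / α(x,y,z). -/
/-- `μ_g(y,z) = α(gyg⁻¹, gzg⁻¹, g)·α(g,y,z) / α(gyg⁻¹, g, z)`. -/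
def muMap {k : Type*} [Field k] {G : Type*} [Group G]
    (α : G → G → G → kˣ) (g y z : G) : kˣ :=
  α (g * y * g⁻¹) (g * z * g⁻¹) g * α g y z * (α (g * y * g⁻¹) g z)⁻¹

theorem mu_identity {k : Type*} [Field k] {G : Type*} [Group G] [Finite G]
    (α : G → G → G → kˣ)
    (hα : ∀ g₀ g₁ g₂ g₃ : G,
      α g₁ g₂ g₃ * (α (g₀ * g₁) g₂ g₃)⁻¹ * α g₀ (g₁ * g₂) g₃ *
        (α g₀ g₁ (g₂ * g₃))⁻¹ * α g₀ g₁ g₂ = 1) :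
    ∀ x y z g : G,
      muMap α g (x * y) z * muMap α g x y * (muMap α g x (y * z) * muMap α g y z)⁻¹ =
        α (g * x * g⁻¹) (g * y * g⁻¹) (g * z * g⁻¹) * (α x y z)⁻¹ := by
  intro x y z g
  have H : ∀ g₀ g₁ g₂ g₃ : G,
      (α g₁ g₂ g₃ : k) * α g₀ (g₁ * g₂) g₃ * α g₀ g₁ g₂ =
        α (g₀ * g₁) g₂ g₃ * α g₀ g₁ (g₂ * g₃) := by
    intro g₀ g₁ g₂ g₃
    have h := congrArg (Units.val) (hα g₀ g₁ g₂ g₃)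
    push_cast at h
    field_simp at h
    linear_combination h
  have e1 : ∀ a : G, g * a * g⁻¹ * g = g * a := by intro a; group
  have e2 : ∀ a b : G, (g * a * g⁻¹) * (g * b * g⁻¹) = g * (a * b) * g⁻¹ := by
    intro a b; group
  have h1 := H g x y z
  have h2 := H (g * x * g⁻¹) g y z
  have h3 := H (g * x * g⁻¹) (g * y * g⁻¹) g z
  have h4 := H (g * x * g⁻¹) (g * y * g⁻¹) (g * z * g⁻¹) g
  simp only [e1, e2] at h2 h3 h4
  rw [Units.ext_iff]
  simp only [muMap]
  push_cast
  field_simp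
  linear_combination
    ((α (g * (x * y) * g⁻¹) (g * z * g⁻¹) g : k) * α (g * x * g⁻¹) (g * y * g⁻¹) g *
        α (g * x * g⁻¹) g (y * z) * α (g * y * g⁻¹) g z) * h1 -
    ((α (g * (x * y) * g⁻¹) (g * z * g⁻¹) g : k) * α (g * x * g⁻¹) (g * y * g⁻¹) g *
        α (g * y * g⁻¹) g z * α g x (y * z)) * h2 +
    ((α (g * (x * y) * g⁻¹) (g * z * g⁻¹) g : k) * α g x (y * z) * α g y z *
        α (g * x * g⁻¹) g y) * h3 -
    ((α g x (y * z) : k) * α g y z * α (g * x * g⁻¹) g y *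
        α (g * (x * y) * g⁻¹) g z) * h4
end

section
/- Let G be a finite group and α ∈ Z^3(G, k^×) a 3-cocycle. Define γ_{g,h}(x) = α(g, hxh⁻¹, h) / (α(g,h,x)·α(ghxh⁻¹g⁻¹, g, h)). Then for all g,h,f,x ∈ G: γ_{gh,f}(x)·γ_{g,h}(fxf⁻¹) = γ_{g,hf}(x)·γ_{h,f}(x). -/
private lemma abs1 {M : Type*} [CommGroup M] {a b c d e : M}
    (h : a * b⁻¹ * c * d⁻¹ * e = 1) : a * c * e = b * d := by
  rw [← mul_inv_eq_one, ← h]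
  simp [mul_inv, mul_comm, mul_left_comm, mul_assoc]

private lemma abs2 {M : Type*} [CommGroup M] {a1 d1 a2 d2 a3 d3 a4 d4 : M}
    (h : a1 * a2 * (d3 * d4) = a3 * a4 * (d1 * d2)) :
    a1 * d1⁻¹ * (a2 * d2⁻¹) = a3 * d3⁻¹ * (a4 * d4⁻¹) := by
  rw [← mul_inv_eq_one] at h ⊢
  rw [← h]
  simp [mul_inv, inv_inv, mul_comm, mul_left_comm, mul_assoc]

/-- `γ_{g,h}(x) = α(g, hxh⁻¹, h) / (α(g,h,x)·α(ghxh⁻¹g⁻¹, g, h))`. -/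
def gammaMap {k : Type*} [Field k] {G : Type*} [Group G]
    (α : G → G → G → kˣ) (g h x : G) : kˣ :=
  α g (h * x * h⁻¹) h * (α g h x * α (g * h * x * h⁻¹ * g⁻¹) g h)⁻¹

theorem gamma_identity {k : Type*} [Field k] {G : Type*} [Group G] [Finite G]
    (α : G → G → G → kˣ)
    (hα : ∀ g₀ g₁ g₂ g₃ : G,
      α g₁ g₂ g₃ * (α (g₀ * g₁) g₂ g₃)⁻¹ * α g₀ (g₁ * g₂) g₃ *
        (α g₀ g₁ (g₂ * g₃))⁻¹ * α g₀ g₁ g₂ = 1) :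
    ∀ g h f x : G,
      gammaMap α (g * h) f x * gammaMap α g h (f * x * f⁻¹) =
        gammaMap α g (h * f) x * gammaMap α h f x := by
  intro g h f x
  have H1 := abs1 (hα g h f x)
  have H2 := abs1 (hα g h (f*x*f⁻¹) f)
  have H3 := abs1 (hα g (h*f*x*f⁻¹*h⁻¹) h f)
  have H4 := abs1 (hα (g*h*f*x*f⁻¹*h⁻¹*g⁻¹) g h f)
  simp only [gammaMap]
  apply abs2
  simp only [mul_assoc, mul_inv_rev, inv_mul_cancel, mul_inv_cancel, one_mul, mul_one,
    inv_mul_cancel_left, mul_inv_cancel_left, inv_inv] at H1 H2 H3 H4 ⊢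
  have mcg : ∀ {a b c d : kˣ}, a = b → c = d → a * c = b * d := by
    rintro a b c d rfl rfl; rfl
  have E := mcg H1 (mcg H3 (mcg H2.symm H4.symm))
  apply mul_right_cancel (b := (α (g * h) f x * α g h (f * x)) *
    ((α (g * (h * (f * (x * (f⁻¹ * h⁻¹))))) h f * α g (h * (f * (x * (f⁻¹ * h⁻¹)))) (h * f)) *
      ((α h (f * (x * f⁻¹)) f * (α g (h * (f * (x * f⁻¹))) f * α g h (f * (x * f⁻¹)))) *
        (α g h f * (α (g * (h * (f * (x * (f⁻¹ * (h⁻¹ * g⁻¹)))))) (g * h) f *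
          α (g * (h * (f * (x * (f⁻¹ * (h⁻¹ * g⁻¹)))))) g h)))))
  nth_rewrite 2 [← E]
  apply Additive.ofMul.injective
  simp only [ofMul_mul]
  abel
end

section
/- Let G be a finite group and α ∈ Z^3(G, k^×) a 3-cocycle. With μ_g(y,z) = α(gyg⁻¹,gzg⁻¹,g)·α(g,y,z)/α(gyg⁻¹,g,z) and γ_{g,h}(x) = α(g,hxh⁻¹,h)/(α(g,h,x)·α(ghxh⁻¹g⁻¹,g,h)), one has for all x,y,g,h ∈ G: μ_{gh}(x,y) / (μ_h(x,y)·μ_g(hxh⁻¹, hyh⁻¹)) = γ_{g,h}(xy) / (γ_{g,h}(x)·γ_{g,h}(y)). -/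
set_option maxHeartbeats 4000000 in
theorem mu_gamma_compatibility {k : Type*} [Field k] {G : Type*} [Group G] [Finite G]
    (α : G → G → G → kˣ)
    (hα : ∀ g₀ g₁ g₂ g₃ : G,
      α g₁ g₂ g₃ * (α (g₀ * g₁) g₂ g₃)⁻¹ * α g₀ (g₁ * g₂) g₃ *
        (α g₀ g₁ (g₂ * g₃))⁻¹ * α g₀ g₁ g₂ = 1) :
    ∀ x y g h : G,
      muMap α (g * h) x y * (muMap α h x y * muMap α g (h * x * h⁻¹) (h * y * h⁻¹))⁻¹ =
        gammaMap α g h (x * y) * (gammaMap α g h x * gammaMap α g h y)⁻¹ := by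
  intro x y g h
  have coc : ∀ a b c d : G,
      (α b c d : k) * (α a (b * c) d : k) * (α a b c : k) =
        (α (a * b) c d : k) * (α a b (c * d) : k) := by
    intro a b c d
    have h0 := congrArg (Units.val) (hα a b c d)
    simp only [Units.val_mul, Units.val_inv_eq_inv_val, Units.val_one] at h0
    field_simp at h0
    linear_combination h0
  have h1 := coc g h x y
  have h2 := coc g (h * (x * h⁻¹)) h y
  have h3 := coc g (h * (x * h⁻¹)) (h * (y * h⁻¹)) h
  have h4 := coc (g * (h * (x * (h⁻¹ * g⁻¹)))) g h y
  have h5 := coc (g * (h * (x * (h⁻¹ * g⁻¹)))) g (h * (y * h⁻¹)) h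
  have h6 := coc (g * (h * (x * (h⁻¹ * g⁻¹)))) (g * (h * (y * (h⁻¹ * g⁻¹)))) g h
  simp only [mul_assoc, mul_inv_rev, inv_mul_cancel_left, mul_inv_cancel_left, inv_inv,
    inv_mul_cancel, mul_inv_cancel, one_mul, mul_one] at h1 h2 h3 h4 h5 h6
  have H : ((α h x y : k) * ((α g (h * x) y : k) * ((α g h x : k)))) * ((α (g * (h * (x * h⁻¹))) h y : k) * ((α g (h * (x * h⁻¹)) (h * y) : k))) * ((α (h * (x * h⁻¹)) (h * (y * h⁻¹)) h : k) * ((α g (h * (x * (y * h⁻¹))) h : k) * ((α g (h * (x * h⁻¹)) (h * (y * h⁻¹)) : k)))) * ((α g h y : k) * ((α (g * (h * (x * (h⁻¹ * g⁻¹)))) (g * h) y : k) * ((α (g * (h * (x * (h⁻¹ * g⁻¹)))) g h : k)))) * ((α (g * (h * (x * h⁻¹))) (h * (y * h⁻¹)) h : k) * ((α (g * (h * (x * (h⁻¹ * g⁻¹)))) g (h * y) : k))) * ((α (g * (h * (y * (h⁻¹ * g⁻¹)))) g h : k) * ((α (g * (h * (x * (h⁻¹ * g⁻¹)))) (g * (h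 * (y * h⁻¹))) h : k) * ((α (g * (h * (x * (h⁻¹ * g⁻¹)))) (g * (h * (y * (h⁻¹ * g⁻¹)))) g : k)))) = ((α (g * h) x y : k) * ((α g h (x * y) : k))) * ((α (h * (x * h⁻¹)) h y : k) * ((α g (h * x) y : k) * ((α g (h * (x * h⁻¹)) h : k)))) * ((α (g * (h * (x * h⁻¹))) (h * (y * h⁻¹)) h : k) * ((α g (h * (x * h⁻¹)) (h * y) : k))) * ((α (g * (h * (x * h⁻¹))) h y : k) * ((α (g * (h * (x * (h⁻¹ * g⁻¹)))) g (h * y) : k))) * ((α g (h * (y * h⁻¹)) h : k) * ((α (g * (h * (x * (h⁻¹ * g⁻¹)))) (g * (h * (y * h⁻¹))) h : k) * ((α (g * (h * (x * (h⁻¹ * g⁻¹)))) g (h * (y * h⁻¹)) : k)))) * ((α (g * (h * (x * (y * (h⁻¹ * g⁻¹))))) g h : k) * ((α (g * (h * (x * (h⁻¹ * g⁻¹)))) (g * (h * (y * (h⁻¹ * g⁻¹)))) (g * h) : k))) := by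
    rw [h1, h2, h3, h4, h5, h6]
  have main : ((α g h (x * y) : k) * (α g (h * (x * h⁻¹)) h : k) * (α g (h * (y * h⁻¹)) h : k) * (α (g * h) x y : k) * (α (g * (h * (x * (h⁻¹ * g⁻¹)))) g (h * (y * h⁻¹)) : k) * (α (g * (h * (x * (h⁻¹ * g⁻¹)))) (g * (h * (y * (h⁻¹ * g⁻¹)))) (g * h) : k) * (α (g * (h * (x * (y * (h⁻¹ * g⁻¹))))) g h : k) * (α (h * (x * h⁻¹)) h y : k)) = ((α g h x : k) * (α g h y : k) * (α g (h * (x * h⁻¹)) (h * (y * h⁻¹)) : k) * (α g (h * (x * (y * h⁻¹))) h : k) * (α (g * (h * (x * (h⁻¹ * g⁻¹)))) g h : k) * (α (g * (h * (x * (h⁻¹ * g⁻¹)))) (g * h) y : k) * (α (g * (h * (x * (h⁻¹ * g⁻¹)))) (g * (h * (y * (h⁻¹ * g⁻¹)))) g : k) * (α (g * (h * (y * (h⁻¹ * g⁻¹)))) g h : k) * (α h x y : k) * (α (h * (x * h⁻¹)) (h * (y * h⁻¹)) h : k)) := by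
    have key : ((α g h (x * y) : k) * (α g (h * (x * h⁻¹)) h : k) * (α g (h * (y * h⁻¹)) h : k) * (α (g * h) x y : k) * (α (g * (h * (x * (h⁻¹ * g⁻¹)))) g (h * (y * h⁻¹)) : k) * (α (g * (h * (x * (h⁻¹ * g⁻¹)))) (g * (h * (y * (h⁻¹ * g⁻¹)))) (g * h) : k) * (α (g * (h * (x * (y * (h⁻¹ * g⁻¹))))) g h : k) * (α (h * (x * h⁻¹)) h y : k)) * (((α h x y : k) * ((α g (h * x) y : k) * ((α g h x : k)))) * ((α (g * (h * (x * h⁻¹))) h y : k) * ((α g (h * (x * h⁻¹)) (h * y) : k))) * ((α (h * (x * h⁻¹)) (h * (y * h⁻¹)) h : k) * ((α g (h * (x * (y * h⁻¹))) h : k) * ((α g (h * (x * h⁻¹)) (h * (y * h⁻¹)) : k)))) * ((α g h y : k) * ((α (g * (h * (x * (h⁻¹ * g⁻¹)))) (g * h) y : k) * ((α (g * (h * (x * (h⁻¹ * g⁻¹)))) g h : k)))) * ((α (g * (h * (x * h⁻¹))) (h * (y * h⁻¹)) h : k) * ((α (g * (h * (x * (h⁻¹ * g⁻¹)))) g (h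 * y) : k))) * ((α (g * (h * (y * (h⁻¹ * g⁻¹)))) g h : k) * ((α (g * (h * (x * (h⁻¹ * g⁻¹)))) (g * (h * (y * h⁻¹))) h : k) * ((α (g * (h * (x * (h⁻¹ * g⁻¹)))) (g * (h * (y * (h⁻¹ * g⁻¹)))) g : k))))) = ((α g h x : k) * (α g h y : k) * (α g (h * (x * h⁻¹)) (h * (y * h⁻¹)) : k) * (α g (h * (x * (y * h⁻¹))) h : k) * (α (g * (h * (x * (h⁻¹ * g⁻¹)))) g h : k) * (α (g * (h * (x * (h⁻¹ * g⁻¹)))) (g * h) y : k) * (α (g * (h * (x * (h⁻¹ * g⁻¹)))) (g * (h * (y * (h⁻¹ * g⁻¹)))) g : k) * (α (g * (h * (y * (h⁻¹ * g⁻¹)))) g h : k) * (α h x y : k) * (α (h * (x * h⁻¹)) (h * (y * h⁻¹)) h : k)) * (((α (g * h) x y : k) * ((α g h (x * y) : k))) * ((α (h * (x * h⁻¹)) h y : k) * ((α g (h * x) y : k) * ((α g (h * (x * h⁻¹)) h : k)))) * ((α (g * (h * (x * h⁻¹))) (h * (y * h⁻¹)) h : k) * ((α g (h * (x * h⁻¹))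 (h * y) : k))) * ((α (g * (h * (x * h⁻¹))) h y : k) * ((α (g * (h * (x * (h⁻¹ * g⁻¹)))) g (h * y) : k))) * ((α g (h * (y * h⁻¹)) h : k) * ((α (g * (h * (x * (h⁻¹ * g⁻¹)))) (g * (h * (y * h⁻¹))) h : k) * ((α (g * (h * (x * (h⁻¹ * g⁻¹)))) g (h * (y * h⁻¹)) : k)))) * ((α (g * (h * (x * (y * (h⁻¹ * g⁻¹))))) g h : k) * ((α (g * (h * (x * (h⁻¹ * g⁻¹)))) (g * (h * (y * (h⁻¹ * g⁻¹)))) (g * h) : k)))) := by ring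
    rw [H] at key
    have Yne : (((α (g * h) x y : k) * ((α g h (x * y) : k))) * ((α (h * (x * h⁻¹)) h y : k) * ((α g (h * x) y : k) * ((α g (h * (x * h⁻¹)) h : k)))) * ((α (g * (h * (x * h⁻¹))) (h * (y * h⁻¹)) h : k) * ((α g (h * (x * h⁻¹)) (h * y) : k))) * ((α (g * (h * (x * h⁻¹))) h y : k) * ((α (g * (h * (x * (h⁻¹ * g⁻¹)))) g (h * y) : k))) * ((α g (h * (y * h⁻¹)) h : k) * ((α (g * (h * (x * (h⁻¹ * g⁻¹)))) (g * (h * (y * h⁻¹))) h : k) * ((α (g * (h * (x * (h⁻¹ * g⁻¹)))) g (h * (y * h⁻¹)) : k)))) * ((α (g * (h * (x * (y * (h⁻¹ * g⁻¹))))) g h : k) * ((α (g * (h * (x * (h⁻¹ * g⁻¹)))) (g * (h * (y * (h⁻¹ * g⁻¹)))) (g * h) : k)))) ≠ 0 := by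
      simp [mul_ne_zero_iff]
    exact mul_right_cancel₀ Yne key
  rw [Units.ext_iff]
  simp only [muMap, gammaMap, Units.val_mul, Units.val_inv_eq_inv_val, mul_assoc, mul_inv_rev,
    inv_mul_cancel_left, mul_inv_cancel_left, inv_inv, inv_mul_cancel, mul_inv_cancel, one_mul,
    mul_one]
  field_simp
  field_simp at main
  linear_combination main
end

section
/- Let G and H be groups, V and W finite-dimensional vector spaces over a field k, and suppose ρ : P → GL(V) and σ : P → GL(W) are homomorphisms from a group P such that the map τ(p) = ρ(p) ⊗ σ(p) : P → GL(V ⊗ W) has finite image, and such that the determinants det(ρ(p)) all lie in a finite subgroup of k^×. Then ρ(P) and σ(P) are both finite. -/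
open TensorProduct

section Aux

variable {k V W : Type*} [Field k]
    [AddCommGroup V] [Module k V] [FiniteDimensional k V] [Nontrivial V]
    [AddCommGroup W] [Module k W] [FiniteDimensional k W] [Nontrivial W]

lemma aux_core (C : V →ₗ[k] V) (D : W →ₗ[k] W) (hC : Function.Injective C)
    (hD : Function.Injective D)
    (h : TensorProduct.map C D = LinearMap.id) :
    ∃ a : k, a ≠ 0 ∧ C = a • LinearMap.id := by
  have key : ∀ (f : V →ₗ[k] k) (g : W →ₗ[k] k) (v : V) (w : W),
      f (C v) * g (D w) = f v * g w := by
    intro f g v w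
    have h1 : TensorProduct.map C D (v ⊗ₜ w) = v ⊗ₜ w := by rw [h]; rfl
    rw [TensorProduct.map_tmul] at h1
    have := congrArg (TensorProduct.lift (f.smulRight g)) h1
    simpa [smul_eq_mul] using this
  obtain ⟨w₀, hw₀⟩ := exists_ne (0 : W)
  have hDw₀ : D w₀ ≠ 0 := fun hz => hw₀ (hD (by simpa using hz))
  obtain ⟨g₀, hg₀⟩ : ∃ g₀ : W →ₗ[k] k, g₀ (D w₀) ≠ 0 := by
    by_contra hcon
    push_neg at hcon
    exact hDw₀ ((Module.forall_dual_apply_eq_zero_iff k (D w₀)).mp hcon)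
  set a : k := g₀ w₀ / g₀ (D w₀) with ha
  have hCv : ∀ v : V, C v = a • v := by
    intro v
    have hz : ∀ f : V →ₗ[k] k, f (C v - a • v) = 0 := by
      intro f
      have h2 : f (C v) = a * f v := by
        rw [ha]
        field_simp
        linear_combination key f g₀ v w₀
      simp [h2, smul_eq_mul, mul_comm]
    have := (Module.forall_dual_apply_eq_zero_iff k (C v - a • v)).mp hz
    exact sub_eq_zero.mp this
  refine ⟨a, ?_, ?_⟩
  · intro h0
    obtain ⟨v₀, hv₀⟩ := exists_ne (0 : V)
    exact hv₀ (hC (by simp [hCv v₀, h0]))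
  · ext v; simp [hCv v]

lemma aux_unit_inj (A : (V →ₗ[k] V)ˣ) : Function.Injective (A : V →ₗ[k] V) := by
  intro x y hxy
  have := congrArg (((A⁻¹ : (V →ₗ[k] V)ˣ) : V →ₗ[k] V)) hxy
  simpa [← LinearMap.comp_apply, ← Module.End.mul_eq_comp, ← Units.val_mul] using this

lemma aux_tmul_cancel (v₀ : V) (hv₀ : v₀ ≠ 0) (y : W)
    (h : (v₀ ⊗ₜ[k] y : V ⊗[k] W) = 0) : y = 0 := by
  obtain ⟨f₀, hf₀⟩ : ∃ f₀ : V →ₗ[k] k, f₀ v₀ ≠ 0 := by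
    by_contra hcon
    push_neg at hcon
    exact hv₀ ((Module.forall_dual_apply_eq_zero_iff k v₀).mp hcon)
  refine (Module.forall_dual_apply_eq_zero_iff k y).mp fun g => ?_
  have := congrArg (TensorProduct.lift (f₀.smulRight g)) h
  simp only [TensorProduct.lift.tmul, LinearMap.smulRight_apply, smul_eq_mul, map_zero] at this
  exact (mul_eq_zero.mp this).resolve_left hf₀

end Aux

open TensorProduct in
/-- If the Kronecker product representation `p ↦ ρ(p) ⊗ σ(p)` has finite image and the
determinants `det ρ(p)` lie in a finite subgroup of `kˣ` (all are `N`-th roots of unity),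
then both `ρ` and `σ` have finite image. -/
theorem finite_image_of_tensor_finite {k V W P : Type*} [Field k]
    [AddCommGroup V] [Module k V] [FiniteDimensional k V] [Nontrivial V]
    [AddCommGroup W] [Module k W] [FiniteDimensional k W] [Nontrivial W]
    [Group P]
    (ρ : P →* (V →ₗ[k] V)ˣ) (σ : P →* (W →ₗ[k] W)ˣ)
    (hτ : (Set.range fun p =>
      TensorProduct.map (ρ p : V →ₗ[k] V) (σ p : W →ₗ[k] W)).Finite)
    (N : ℕ) (hN : 0 < N)
    (hdet : ∀ p : P, (LinearMap.det (ρ p : V →ₗ[k] V)) ^ N = 1) :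
    (Set.range fun p => ρ p).Finite ∧ (Set.range fun p => σ p).Finite := by
  set τf : P → (V ⊗[k] W →ₗ[k] V ⊗[k] W) :=
    fun p => TensorProduct.map (ρ p : V →ₗ[k] V) (σ p : W →ₗ[k] W) with hτf
  set n : ℕ := Module.finrank k V with hn
  have hnpos : 0 < n := Module.finrank_pos
  -- composition identity: coe of (ρ q)⁻¹ * (ρ p) etc.
  have hcoe : ∀ (A B : (V →ₗ[k] V)ˣ),
      ((A * B : (V →ₗ[k] V)ˣ) : V →ₗ[k] V) = (A : V →ₗ[k] V) ∘ₗ (B : V →ₗ[k] V) := by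
    intro A B; rw [Units.val_mul, Module.End.mul_eq_comp]
  have hcoeW : ∀ (A B : (W →ₗ[k] W)ˣ),
      ((A * B : (W →ₗ[k] W)ˣ) : W →ₗ[k] W) = (A : W →ₗ[k] W) ∘ₗ (B : W →ₗ[k] W) := by
    intro A B; rw [Units.val_mul, Module.End.mul_eq_comp]
  -- Key 1: if τ p = τ q then ρ p = a • ρ q with a^(n*N) = 1
  have key1 : ∀ p q : P, τf p = τf q →
      ∃ a : k, a ≠ 0 ∧ (ρ p : V →ₗ[k] V) = a • (ρ q : V →ₗ[k] V) ∧ a ^ (n * N) = 1 := by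
    intro p q hpq
    have hmap : TensorProduct.map (((ρ q)⁻¹ * ρ p : (V →ₗ[k] V)ˣ) : V →ₗ[k] V)
        (((σ q)⁻¹ * σ p : (W →ₗ[k] W)ˣ) : W →ₗ[k] W) = LinearMap.id := by
      rw [hcoe, hcoeW, TensorProduct.map_comp]
      show _ ∘ₗ τf p = _
      rw [hpq, hτf]
      rw [← TensorProduct.map_comp, ← hcoe, ← hcoeW, inv_mul_cancel, inv_mul_cancel]
      rw [Units.val_one, Units.val_one]
      exact TensorProduct.map_id
    obtain ⟨a, ha0, hCa⟩ := aux_core _ _ (aux_unit_inj _) (aux_unit_inj _) hmap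
    have hρeq : (ρ p : V →ₗ[k] V) = a • (ρ q : V →ₗ[k] V) := by
      have := congrArg (fun f => ((ρ q : V →ₗ[k] V)) ∘ₗ f) (hcoe ((ρ q)⁻¹) (ρ p) ▸ hCa)
      rw [← LinearMap.comp_assoc, ← hcoe, mul_inv_cancel] at this
      refine LinearMap.ext fun v => ?_
      have h4 := LinearMap.congr_fun this v
      simpa using h4
    refine ⟨a, ha0, hρeq, ?_⟩
    have hd := congrArg LinearMap.det hρeq
    rw [LinearMap.det_smul] at hd
    calc a ^ (n * N) = (a ^ n) ^ N := by rw [pow_mul]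
      _ = (a ^ n) ^ N * (LinearMap.det (ρ q : V →ₗ[k] V)) ^ N := by rw [hdet q, mul_one]
      _ = (LinearMap.det (ρ p : V →ₗ[k] V)) ^ N := by rw [hd, mul_pow]
      _ = 1 := hdet p
  classical
  -- Key 2: σ is determined by ρ and τ
  have key2 : ∀ p q : P, ρ p = ρ q → τf p = τf q → σ p = σ q := by
    intro p q hρpq hτpq
    obtain ⟨v₀, hv₀⟩ := exists_ne (0 : V)
    have hmap : ∀ r : P,
        TensorProduct.map ((((ρ r)⁻¹ : (V →ₗ[k] V)ˣ) : V →ₗ[k] V) ∘ₗ (ρ r : V →ₗ[k] V))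
          ((1 : W →ₗ[k] W) ∘ₗ (σ r : W →ₗ[k] W))
        = TensorProduct.map (((ρ r)⁻¹ : (V →ₗ[k] V)ˣ) : V →ₗ[k] V) (1 : W →ₗ[k] W)
            ∘ₗ τf r := fun r => TensorProduct.map_comp _ _ _ _
    have h1 : ∀ r : P, TensorProduct.map (1 : V →ₗ[k] V) (σ r : W →ₗ[k] W)
        = TensorProduct.map (((ρ r)⁻¹ : (V →ₗ[k] V)ˣ) : V →ₗ[k] V) (1 : W →ₗ[k] W)
            ∘ₗ τf r := by
      intro r
      rw [← hmap r, ← hcoe, inv_mul_cancel, Units.val_one]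
      congr 1
    have heq : TensorProduct.map (1 : V →ₗ[k] V) (σ p : W →ₗ[k] W)
        = TensorProduct.map (1 : V →ₗ[k] V) (σ q : W →ₗ[k] W) := by
      rw [h1 p, h1 q, hρpq, hτpq]
    refine Units.ext (LinearMap.ext fun w => ?_)
    have happ := LinearMap.congr_fun heq (v₀ ⊗ₜ[k] w)
    simp only [TensorProduct.map_tmul, Module.End.one_apply] at happ
    have hz : (v₀ ⊗ₜ[k] ((σ p : W →ₗ[k] W) w - (σ q : W →ₗ[k] W) w) : V ⊗[k] W) = 0 := by
      rw [TensorProduct.tmul_sub, happ, sub_self]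
    exact sub_eq_zero.mp (aux_tmul_cancel v₀ hv₀ _ hz)
  -- the set of (n*N)-th roots of unity is finite
  set S : Set k := {x : k | x ^ (n * N) = 1} with hS
  have hSfin : S.Finite := by
    have hpne : ((Polynomial.X : Polynomial k) ^ (n * N) - 1) ≠ 0 := by
      have := Polynomial.X_pow_sub_C_ne_zero (Nat.mul_pos hnpos hN) (1 : k)
      simpa using this
    refine (Polynomial.finite_setOf_isRoot hpne).subset fun x hx => ?_
    simp only [Set.mem_setOf_eq, Polynomial.IsRoot, Polynomial.eval_sub,
      Polynomial.eval_pow, Polynomial.eval_X, Polynomial.eval_one]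
    rw [hx]; ring
  -- finiteness of the range of ρ
  have hρcoe : (Set.range fun p => ((ρ p : V →ₗ[k] V))).Finite := by
    have himage : (Set.range fun p => ((ρ p : V →ₗ[k] V))) ⊆
        (fun x : (V ⊗[k] W →ₗ[k] V ⊗[k] W) × k =>
          x.2 • (ρ (if h : ∃ p', τf p' = x.1 then h.choose else 1) : V →ₗ[k] V)) ''
          ((Set.range τf) ×ˢ S) := by
      rintro _ ⟨p, rfl⟩
      have hex : ∃ p', τf p' = τf p := ⟨p, rfl⟩
      obtain ⟨a, _, heq, haN⟩ := key1 p hex.choose hex.choose_spec.symm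
      refine ⟨(τf p, a), ⟨⟨p, rfl⟩, haN⟩, ?_⟩
      dsimp only
      rw [dif_pos hex]
      exact heq.symm
    exact ((hτ.prod hSfin).image _).subset himage
  have hρfin : (Set.range fun p => ρ p).Finite := by
    apply Set.Finite.of_finite_image (f := (Units.val : (V →ₗ[k] V)ˣ → (V →ₗ[k] V)))
    · rw [← Set.range_comp]
      exact hρcoe
    · exact fun x _ y _ h => Units.ext h
  -- finiteness of the range of σ
  have hpair : (Set.range fun p => (ρ p, τf p)).Finite :=
    (hρfin.prod hτ).subset (by rintro _ ⟨p, rfl⟩; exact ⟨⟨p, rfl⟩, ⟨p, rfl⟩⟩)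
  have hσfin : (Set.range fun p => σ p).Finite := by
    have hsub : (Set.range fun p => σ p) ⊆
        (fun x : (V →ₗ[k] V)ˣ × (V ⊗[k] W →ₗ[k] V ⊗[k] W) =>
          σ (if h : ∃ p', (ρ p', τf p') = x then h.choose else 1)) ''
          (Set.range fun p => (ρ p, τf p)) := by
      rintro _ ⟨p, rfl⟩
      have hex : ∃ p', (ρ p', τf p') = (ρ p, τf p) := ⟨p, rfl⟩
      refine ⟨(ρ p, τf p), ⟨p, rfl⟩, ?_⟩
      dsimp only
      rw [dif_pos hex]
      exact key2 _ p (congrArg Prod.fst hex.choose_spec) (congrArg Prod.snd hex.choose_spec)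
    exact (hpair.image _).subset hsub
  exact ⟨hρfin, hσfin⟩
end

section
/- Fix n ≥ 1 and a finite group G. The assignment π(σ_i)((g₁,h₁),...,(g_n,h_n)) = ((g₁,h₁),...,(g_{i-1},h_{i-1}), (g_i h_i g_i⁻¹ g_{i+1}, h_{i+1}), (g_i,h_i), (g_{i+2},h_{i+2}),...,(g_n,h_n)) on elementary braid generators extends to a well-defined group action of the braid group B_n on the finite set G^{2n}; i.e., the defined permutations satisfy the braid relations π(σ_i)π(σ_{i+1})π(σ_i) = π(σ_{i+1})π(σ_i)π(σ_{i+1}) and π(σ_i)π(σ_j) = π(σ_j)π(σ_i) for |i−j| > 1. -/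
/-!
Write `c p = p.1 * p.2 * p.1⁻¹` for a pair `p ∈ G × G`. The generator `σ_i` replaces the
neighbouring pairs `p, q` by `(c p * q.1, q.2), p`, and `c (c p * q.1, q.2) = c p * c q * (c p)⁻¹`,
so on the values of `c` it is the Hurwitz action. Consequently both sides of the braid relation
send three consecutive pairs `p, q, r` to `(c p * c q * r.1, r.2), (c p * q.1, q.2), p`.
Generators with `|i - j| > 1` touch disjoint positions and commute.
Each `σ_i` is inverted by solving for `p` and `q`.
-/

/-- The map on `G^{2n} = (G × G)^n` given by the elementary braid `σ_{i+1}`: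
`(..., (gᵢ,hᵢ), (gᵢ₊₁,hᵢ₊₁), ...) ↦ (..., (gᵢhᵢgᵢ⁻¹gᵢ₊₁, hᵢ₊₁), (gᵢ,hᵢ), ...)`
(positions are 0-indexed: it modifies positions `i` and `i+1`). -/
def braidMap {G : Type*} [Group G] {n : ℕ} (i : ℕ) (h : i + 1 < n)
    (x : Fin n → G × G) : Fin n → G × G := fun j =>
  if (j : ℕ) = i then
    ((x ⟨i, by omega⟩).1 * (x ⟨i, by omega⟩).2 * (x ⟨i, by omega⟩).1⁻¹ *
        (x ⟨i + 1, h⟩).1,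
      (x ⟨i + 1, h⟩).2)
  else if (j : ℕ) = i + 1 then x ⟨i, by omega⟩
  else x j


section

variable {G : Type*} [Group G] {n i : ℕ} (h : i + 1 < n) (x : Fin n → G × G) {k : Fin n}

theorem braidMap_apply_of_val_eq (hk : (k : ℕ) = i) :
    braidMap i h x k =
      ((x ⟨i, by omega⟩).1 * (x ⟨i, by omega⟩).2 * (x ⟨i, by omega⟩).1⁻¹ * (x ⟨i + 1, h⟩).1,
        (x ⟨i + 1, h⟩).2) :=
  if_pos hk

theorem braidMap_apply_of_val_eq_succ (hk : (k : ℕ) = i + 1) :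
    braidMap i h x k = x ⟨i, by omega⟩ := by
  rw [braidMap, if_neg (by omega), if_pos hk]

theorem braidMap_apply_of_val_ne (hi : (k : ℕ) ≠ i) (hi' : (k : ℕ) ≠ i + 1) :
    braidMap i h x k = x k := by
  rw [braidMap, if_neg hi, if_neg hi']

def braidMapInv (y : Fin n → G × G) : Fin n → G × G := fun k =>
  if (k : ℕ) = i then y ⟨i + 1, h⟩
  else if (k : ℕ) = i + 1 then
    (((y ⟨i + 1, h⟩).1 * (y ⟨i + 1, h⟩).2 * (y ⟨i + 1, h⟩).1⁻¹)⁻¹ * (y ⟨i, by omega⟩).1,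
      (y ⟨i, by omega⟩).2)
  else y k

theorem braidMapInv_apply_of_val_eq (hk : (k : ℕ) = i) : braidMapInv h x k = x ⟨i + 1, h⟩ :=
  if_pos hk

theorem braidMapInv_apply_of_val_eq_succ (hk : (k : ℕ) = i + 1) :
    braidMapInv h x k =
      (((x ⟨i + 1, h⟩).1 * (x ⟨i + 1, h⟩).2 * (x ⟨i + 1, h⟩).1⁻¹)⁻¹ * (x ⟨i, by omega⟩).1,
        (x ⟨i, by omega⟩).2) := by
  rw [braidMapInv, if_neg (by omega), if_pos hk]

theorem braidMapInv_apply_of_val_ne (hi : (k : ℕ) ≠ i) (hi' : (k : ℕ) ≠ i + 1) :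
    braidMapInv h x k = x k := by
  rw [braidMapInv, if_neg hi, if_neg hi']

theorem braidMapInv_braidMap : braidMapInv h (braidMap i h x) = x := by
  funext ⟨k, hk⟩
  obtain rfl | rfl | ⟨hki, hki'⟩ : k = i ∨ k = i + 1 ∨ (k ≠ i ∧ k ≠ i + 1) := by omega
  · simp (disch := grind) only [braidMapInv_apply_of_val_eq, braidMap_apply_of_val_eq_succ]
  · simp (disch := grind) only [braidMapInv_apply_of_val_eq_succ, braidMap_apply_of_val_eq,
      braidMap_apply_of_val_eq_succ]
    group
  · simp (disch := grind) only [braidMapInv_apply_of_val_ne, braidMap_apply_of_val_ne]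

theorem braidMap_braidMapInv : braidMap i h (braidMapInv h x) = x := by
  funext ⟨k, hk⟩
  obtain rfl | rfl | ⟨hki, hki'⟩ : k = i ∨ k = i + 1 ∨ (k ≠ i ∧ k ≠ i + 1) := by omega
  · simp (disch := grind) only [braidMap_apply_of_val_eq, braidMapInv_apply_of_val_eq,
      braidMapInv_apply_of_val_eq_succ]
    group
  · simp (disch := grind) only [braidMap_apply_of_val_eq_succ, braidMapInv_apply_of_val_eq]
  · simp (disch := grind) only [braidMap_apply_of_val_ne, braidMapInv_apply_of_val_ne]

theorem braidMap_bijective : Function.Bijective (braidMap (G := G) i h) :=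
  Function.bijective_iff_has_inverse.mpr
    ⟨braidMapInv h, braidMapInv_braidMap h, braidMap_braidMapInv h⟩

theorem braidMap_braid (h' : i + 2 < n) :
    braidMap (G := G) i h ∘ braidMap (i + 1) h' ∘ braidMap i h =
      braidMap (i + 1) h' ∘ braidMap i h ∘ braidMap (i + 1) h' := by
  funext x ⟨k, hk⟩
  simp only [Function.comp_apply]
  obtain rfl | rfl | rfl | ⟨hki, hki', hki''⟩ :
      k = i ∨ k = i + 1 ∨ k = i + 2 ∨ (k ≠ i ∧ k ≠ i + 1 ∧ k ≠ i + 2) := by omega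
  all_goals simp (disch := grind) only [braidMap_apply_of_val_eq, braidMap_apply_of_val_eq_succ,
    braidMap_apply_of_val_ne]
  group

theorem braidMap_comm {j : ℕ} (hj : j + 1 < n) (hij : i + 1 < j) :
    braidMap (G := G) i h ∘ braidMap j hj = braidMap j hj ∘ braidMap i h := by
  funext x ⟨k, hk⟩
  simp only [Function.comp_apply]
  obtain rfl | rfl | rfl | rfl | ⟨hki, hki', hkj, hkj'⟩ :
      k = i ∨ k = i + 1 ∨ k = j ∨ k = j + 1 ∨ (k ≠ i ∧ k ≠ i + 1 ∧ k ≠ j ∧ k ≠ j + 1) := by omega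
  all_goals simp (disch := grind) only [braidMap_apply_of_val_eq, braidMap_apply_of_val_eq_succ,
    braidMap_apply_of_val_ne]

end

/-- The maps `π(σ_i)` on `G^{2n}` are bijections and satisfy the braid relations, hence
define an action of the braid group `B_n` on the finite set `G^{2n}`. -/
theorem braidMap_braid_relations {G : Type*} [Group G] (n : ℕ) :
    (∀ (i : ℕ) (h : i + 1 < n),
      Function.Bijective (braidMap (G := G) (n := n) i h)) ∧
    (∀ (i : ℕ) (h1 : i + 1 < n) (h2 : i + 2 < n),
      braidMap (G := G) i h1 ∘ braidMap (i + 1) (by omega) ∘ braidMap i h1 =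
        braidMap (i + 1) (by omega) ∘ braidMap i h1 ∘ braidMap (i + 1) (by omega)) ∧
    (∀ (i j : ℕ) (hi : i + 1 < n) (hj : j + 1 < n), i + 1 < j →
      braidMap (G := G) i hi ∘ braidMap j hj = braidMap j hj ∘ braidMap i hi) :=
  ⟨fun _ h => braidMap_bijective h, fun _ h1 h2 => braidMap_braid h1 h2,
    fun _ _ hi hj hij => braidMap_comm hi hj hij⟩
end

section
/- Let A be a finite abelian group, χ : A × A → k^× a non-degenerate symmetric bicharacter, and q : A → k^× a function satisfying q(a+b)·χ(a,b) = q(a)·q(b) for all a,b ∈ A, with q(a) = q(−a) for all a. Let τ ∈ k with τ² = |A|⁻¹ and Δ ∈ k with Δ² = τ·∑_{a∈A} q(a)⁻¹. Define operators on the vector space V with basis indexed by A^m: σ̃_{2i−1}(a₁,...,a_m) = Δ·q(a_{i−1} − a_i)⁻¹·(a₁,...,a_m) (with a₀ = 0), and σ̃_{2i}(a₁,...,a_m) = τ·Δ³·∑_{b∈A} q(a_i − b)·(a₁,...,a_{i−1},b,a_{i+1},...,a_m). Then σ̃_{2i−1}·σ̃_{2i}·σ̃_{2i−1} = σ̃_{2i}·σ̃_{2i−1}·σ̃_{2i}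 for each i. -/
set_option linter.unusedSectionVars false

/-- `a_{i-1}`, with the convention `a₀ = 0` (0-indexed: the entry before position `i`). -/
def prevEntry {A : Type*} [AddCommGroup A] {m : ℕ} (a : Fin m → A) (i : Fin m) : A :=
  if h : (i : ℕ) = 0 then 0 else a ⟨(i : ℕ) - 1, by have := i.isLt; omega⟩

/-- The odd elementary braid operator `σ̃_{2i-1}` (here `i : Fin m` is 0-indexed):
`(a₁,...,a_m) ↦ Δ·q(a_{i-1} - a_i)⁻¹·(a₁,...,a_m)`, acting diagonally on the vector space
of `k`-valued functions on `A^m` (identified with the span of the basis `A^m`). -/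
def tyOdd {k A : Type*} [Field k] [AddCommGroup A] [Fintype A] {m : ℕ}
    (q : A → kˣ) (Δ : k) (i : Fin m) (f : (Fin m → A) → k) : (Fin m → A) → k :=
  fun a => Δ * ((q (prevEntry a i - a i) : k))⁻¹ * f a

/-- The even elementary braid operator `σ̃_{2i}`:
`(a₁,...,a_m) ↦ τ·Δ³·∑_{b∈A} q(a_i - b)·(a₁,...,a_{i-1},b,a_{i+1},...,a_m)`. -/
def tyEven {k A : Type*} [Field k] [AddCommGroup A] [Fintype A] {m : ℕ}
    (q : A → kˣ) (τ Δ : k) (i : Fin m) (f : (Fin m → A) → k) : (Fin m → A) → k :=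
  fun a => τ * Δ ^ 3 * ∑ b : A, (q (a i - b) : k) * f (Function.update a i b)


section aux
variable {k A : Type*} [Field k] [AddCommGroup A] [Fintype A]
variable {χ : A → A → kˣ} {q : A → kˣ}

lemma ty_chi_zero_left (hbil : ∀ a b c : A, χ (a + b) c = χ a c * χ b c) (c : A) :
    χ 0 c = 1 := by
  have h := hbil 0 0 c
  rw [add_zero] at h
  nth_rewrite 1 [← mul_one (χ 0 c)] at h
  exact (mul_left_cancel h).symm

lemma ty_chi_neg_left (hbil : ∀ a b c : A, χ (a + b) c = χ a c * χ b c) (a c : A) :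
    χ (-a) c = (χ a c)⁻¹ := by
  have h := hbil a (-a) c
  rw [add_neg_cancel, ty_chi_zero_left hbil] at h
  exact eq_inv_of_mul_eq_one_right h.symm

lemma ty_chi_neg_right (hbil : ∀ a b c : A, χ (a + b) c = χ a c * χ b c)
    (hsym : ∀ a b : A, χ a b = χ b a) (a c : A) :
    χ a (-c) = (χ a c)⁻¹ := by
  rw [hsym, ty_chi_neg_left hbil, hsym]

lemma ty_chi_add_right (hbil : ∀ a b c : A, χ (a + b) c = χ a c * χ b c)
    (hsym : ∀ a b : A, χ a b = χ b a) (a b c : A) :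
    χ a (b + c) = χ a b * χ a c := by
  rw [hsym, hbil, hsym, hsym c a]

lemma ty_q_zero (hbil : ∀ a b c : A, χ (a + b) c = χ a c * χ b c)
    (hq : ∀ a b : A, q (a + b) * χ a b = q a * q b) : q 0 = 1 := by
  have h := hq 0 0
  rw [add_zero, ty_chi_zero_left hbil, mul_one] at h
  nth_rewrite 1 [← mul_one (q 0)] at h
  exact (mul_left_cancel h).symm

lemma ty_l1 (hbil : ∀ a b c : A, χ (a + b) c = χ a c * χ b c)
    (hsym : ∀ a b : A, χ a b = χ b a)
    (hq : ∀ a b : A, q (a + b) * χ a b = q a * q b)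
    (heven : ∀ a : A, q a = q (-a)) (u e : A) :
    q (e - u) = q u * q e * χ u e := by
  have h := hq e (-u)
  rw [← sub_eq_add_neg, ty_chi_neg_right hbil hsym, ← heven u,
    mul_inv_eq_iff_eq_mul] at h
  rw [h, hsym u e, mul_comm (q e) (q u)]

lemma ty_hpp (hbil : ∀ a b c : A, χ (a + b) c = χ a c * χ b c)
    (hsym : ∀ a b : A, χ a b = χ b a)
    (hq : ∀ a b : A, q (a + b) * χ a b = q a * q b)
    (heven : ∀ a : A, q a = q (-a)) (p : A) :
    q p * q p * χ p p = 1 := by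
  have h := ty_l1 hbil hsym hq heven p p
  rw [sub_self, ty_q_zero hbil hq] at h
  exact h.symm


lemma ty_chi_sub_left (hbil : ∀ a b c : A, χ (a + b) c = χ a c * χ b c)
    (a b c : A) : χ (a - b) c = χ a c * (χ b c)⁻¹ := by
  rw [sub_eq_add_neg, hbil, ty_chi_neg_left hbil]

lemma ty_key (hbil : ∀ a b c : A, χ (a + b) c = χ a c * χ b c)
    (hsym : ∀ a b : A, χ a b = χ b a)
    (hq : ∀ a b : A, q (a + b) * χ a b = q a * q b)
    (heven : ∀ a : A, q a = q (-a)) (p x y b : A) :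
    (q (x - b) : k) * ((q (p - b) : k))⁻¹ * (q (b - y) : k) =
    (q (x - p) : k) * (q (p - y) : k) * ((q (p + p - x - y) : k))⁻¹ *
      (q (b + (p - x - y)) : k) := by
  have e1 : b + (p - x - y) = (p + p - x - y) - (p - b) := by abel
  have e2 : χ (p - b) (p + p - x - y)
      = (χ p p * χ p p * (χ p x)⁻¹ * (χ p y)⁻¹) *
        (χ b p * χ b p * (χ b x)⁻¹ * (χ b y)⁻¹)⁻¹ := by
    rw [ty_chi_sub_left hbil]
    have e3 : p + p - x - y = p + p + -x + -y := by abel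
    rw [e3]
    rw [ty_chi_add_right hbil hsym, ty_chi_add_right hbil hsym,
       ty_chi_add_right hbil hsym, ty_chi_neg_right hbil hsym,
       ty_chi_neg_right hbil hsym, ty_chi_add_right hbil hsym,
       ty_chi_add_right hbil hsym, ty_chi_add_right hbil hsym,
       ty_chi_neg_right hbil hsym, ty_chi_neg_right hbil hsym]
  rw [e1, ty_l1 hbil hsym hq heven (p - b) (p + p - x - y), e2,
      ty_l1 hbil hsym hq heven b x, ty_l1 hbil hsym hq heven b p,
      ty_l1 hbil hsym hq heven y b, ty_l1 hbil hsym hq heven p x,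
      ty_l1 hbil hsym hq heven y p, hsym y b, hsym y p]
  have hpp : (q p : k) * (q p : k) * (χ p p : k) = 1 := by
    have h := ty_hpp hbil hsym hq heven p
    have := congrArg (Units.val) h
    push_cast at this
    exact this
  have hχpp : (χ p p : k) = ((q p : k) * (q p : k))⁻¹ :=
    eq_inv_of_mul_eq_one_right hpp
  push_cast [hχpp]
  have h1 : (q p : k) ≠ 0 := Units.ne_zero _
  have h2 : (q (p + p - x - y) : k) ≠ 0 := Units.ne_zero _
  have h3 : (q b : k) ≠ 0 := Units.ne_zero _
  have h4 : ((χ b p : k)) ≠ 0 := Units.ne_zero _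
  have h5 : ((χ p x : k)) ≠ 0 := Units.ne_zero _
  have h6 : ((χ p y : k)) ≠ 0 := Units.ne_zero _
  have h7 : ((χ b x : k)) ≠ 0 := Units.ne_zero _
  have h8 : ((χ b y : k)) ≠ 0 := Units.ne_zero _
  field_simp

lemma ty_key2 (hbil : ∀ a b c : A, χ (a + b) c = χ a c * χ b c)
    (hsym : ∀ a b : A, χ a b = χ b a)
    (hq : ∀ a b : A, q (a + b) * χ a b = q a * q b)
    (heven : ∀ a : A, q a = q (-a)) (p x y : A) :
    (q (x - y) : k) * (q (p + p - x - y) : k) =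
      (q (x - p) : k) * (q (x - p) : k) * (q (p - y) : k) * (q (p - y) : k) := by
  have e1 : p + p - x - y = (p - y) - (x - p) := by abel
  have e2 : χ (x - p) (p - y)
      = χ x p * (χ x y)⁻¹ * (χ p p * (χ p y)⁻¹)⁻¹ := by
    rw [ty_chi_sub_left hbil]
    have e3 : p - y = p + -y := by abel
    rw [e3, ty_chi_add_right hbil hsym, ty_chi_add_right hbil hsym,
      ty_chi_neg_right hbil hsym, ty_chi_neg_right hbil hsym]
  rw [e1, ty_l1 hbil hsym hq heven (x - p) (p - y), e2,
      ty_l1 hbil hsym hq heven y x, ty_l1 hbil hsym hq heven p x,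
      ty_l1 hbil hsym hq heven y p, hsym y x, hsym y p]
  have hpp : (q p : k) * (q p : k) * (χ p p : k) = 1 := by
    have h := ty_hpp hbil hsym hq heven p
    have := congrArg (Units.val) h
    push_cast at this
    exact this
  have hχpp : (χ p p : k) = ((q p : k) * (q p : k))⁻¹ :=
    eq_inv_of_mul_eq_one_right hpp
  push_cast [hχpp, hsym x p, hsym x y]
  have h1 : (q p : k) ≠ 0 := Units.ne_zero _
  have h5 : ((χ p x : k)) ≠ 0 := Units.ne_zero _
  have h6 : ((χ p y : k)) ≠ 0 := Units.ne_zero _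
  have h7 : ((χ y x : k)) ≠ 0 := Units.ne_zero _
  field_simp

lemma ty_char_sum_zero (hbil : ∀ a b c : A, χ (a + b) c = χ a c * χ b c)
    (hsym : ∀ a b : A, χ a b = χ b a) :
    ∑ b : A, (χ b (0 : A) : k) = (Fintype.card A : k) := by
  have h1 : ∀ b : A, χ b (0 : A) = 1 := fun b => by
    rw [hsym]; exact ty_chi_zero_left hbil b
  simp [h1, Finset.card_univ]

lemma ty_char_sum_ne (hbil : ∀ a b c : A, χ (a + b) c = χ a c * χ b c)
    (hsym : ∀ a b : A, χ a b = χ b a)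
    (hnd : ∀ a : A, (∀ b : A, χ a b = 1) → a = 0) {u : A} (hu : u ≠ 0) :
    ∑ b : A, (χ b u : k) = 0 := by
  have hex : ∃ b : A, χ b u ≠ 1 := by
    by_contra hc
    push_neg at hc
    exact hu (hnd u fun b => by rw [hsym]; exact hc b)
  obtain ⟨b₀, hb₀⟩ := hex
  have hS : (χ b₀ u : k) * ∑ b : A, (χ b u : k) = ∑ b : A, (χ b u : k) := by
    rw [Finset.mul_sum]
    refine Fintype.sum_equiv (Equiv.addLeft b₀) _ _ fun b => ?_
    simp only [Equiv.coe_addLeft]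
    rw [hbil]
    push_cast
    ring
  have h0 : ((χ b₀ u : k) - 1) * ∑ b : A, (χ b u : k) = 0 := by
    rw [sub_mul, one_mul, hS, sub_self]
  rcases mul_eq_zero.mp h0 with h | h
  · exact absurd (Units.ext (by rw [sub_eq_zero] at h; simpa using h)) hb₀
  · exact h

lemma ty_gauss (hbil : ∀ a b c : A, χ (a + b) c = χ a c * χ b c)
    (hsym : ∀ a b : A, χ a b = χ b a)
    (hnd : ∀ a : A, (∀ b : A, χ a b = 1) → a = 0)
    (hq : ∀ a b : A, q (a + b) * χ a b = q a * q b) :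
    (∑ a : A, ((q a : k))⁻¹) * (∑ a : A, (q a : k)) = (Fintype.card A : k) := by
  classical
  have h1 : ∀ a : A, ∑ b : A, ((q a : k))⁻¹ * (q b : k)
      = ∑ u : A, (q u : k) * ((χ a u : k))⁻¹ := by
    intro a
    refine (Fintype.sum_equiv (Equiv.addLeft a) _ _ fun u => ?_).symm
    simp only [Equiv.coe_addLeft]
    have h := congrArg (Units.val) (hq a u)
    push_cast at h
    have hqa : (q a : k) ≠ 0 := Units.ne_zero _
    have hχ : (χ a u : k) ≠ 0 := Units.ne_zero _
    field_simp
    linear_combination -h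
  have hinv : ∀ (a u : A), ((χ a u : k))⁻¹ = ((χ a (-u) : k)) := fun a u => by
    rw [ty_chi_neg_right hbil hsym]
    push_cast
    ring
  calc (∑ a : A, ((q a : k))⁻¹) * (∑ a : A, (q a : k))
      = ∑ a : A, ∑ b : A, ((q a : k))⁻¹ * (q b : k) := by
        rw [Finset.sum_mul_sum]
    _ = ∑ a : A, ∑ u : A, (q u : k) * ((χ a u : k))⁻¹ :=
        Finset.sum_congr rfl fun a _ => h1 a
    _ = ∑ u : A, ∑ a : A, (q u : k) * ((χ a u : k))⁻¹ := Finset.sum_comm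
    _ = ∑ u : A, (q u : k) * ∑ a : A, ((χ a u : k))⁻¹ := by
        simp [Finset.mul_sum]
    _ = (Fintype.card A : k) := by
        rw [Finset.sum_eq_single 0 (fun u _ hu => ?_) (fun h => absurd (Finset.mem_univ 0) h)]
        · have : ∀ a : A, ((χ a (0:A) : k))⁻¹ = ((χ a (0:A) : k)) := fun a => by
            rw [hsym]
            rw [ty_chi_zero_left hbil]
            simp
          rw [Finset.sum_congr rfl fun a _ => this a, ty_char_sum_zero hbil hsym,
            ty_q_zero hbil hq]
          simp
        · rw [Finset.sum_congr rfl fun a _ => hinv a u,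
            ty_char_sum_ne hbil hsym hnd (by simpa using hu), mul_zero]

lemma ty_scalar [CharZero k] (hbil : ∀ a b c : A, χ (a + b) c = χ a c * χ b c)
    (hsym : ∀ a b : A, χ a b = χ b a)
    (hnd : ∀ a : A, (∀ b : A, χ a b = 1) → a = 0)
    (hq : ∀ a b : A, q (a + b) * χ a b = q a * q b)
    (heven : ∀ a : A, q a = q (-a))
    (τ Δ : k) (hτ : τ ^ 2 = ((Fintype.card A : k))⁻¹)
    (hΔ : Δ ^ 2 = τ * ∑ a : A, ((q a : k))⁻¹) (p x y : A) :
    τ * Δ ^ 5 * ((q (p - x) : k))⁻¹ * (q (x - y) : k) * ((q (p - y) : k))⁻¹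
      = τ ^ 2 * Δ ^ 7 *
        ∑ b : A, (q (x - b) : k) * ((q (p - b) : k))⁻¹ * (q (b - y) : k) := by
  have hcard : ((Fintype.card A : k)) ≠ 0 := Nat.cast_ne_zero.mpr Fintype.card_ne_zero
  have hsum : ∑ b : A, (q (x - b) : k) * ((q (p - b) : k))⁻¹ * (q (b - y) : k)
      = (q (x - p) : k) * (q (p - y) : k) * ((q (p + p - x - y) : k))⁻¹ *
        ∑ a : A, (q a : k) := by
    rw [Finset.mul_sum]
    refine Fintype.sum_equiv (Equiv.addRight (p - x - y)) _ _ fun b => ?_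
    simp only [Equiv.coe_addRight]
    exact ty_key hbil hsym hq heven p x y b
  rw [hsum]
  have hτΔ : τ ^ 2 * Δ ^ 7 * ∑ a : A, (q a : k) = τ * Δ ^ 5 := by
    have h7 : Δ ^ 7 = Δ ^ 5 * Δ ^ 2 := by ring
    rw [h7, hΔ]
    calc τ ^ 2 * (Δ ^ 5 * (τ * ∑ a : A, ((q a : k))⁻¹)) * ∑ a : A, (q a : k)
        = (τ * Δ ^ 5) *
          (τ ^ 2 * ((∑ a : A, ((q a : k))⁻¹) * ∑ a : A, (q a : k))) := by ring
      _ = (τ * Δ ^ 5) * (((Fintype.card A : k))⁻¹ * (Fintype.card A : k)) := by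
          rw [hτ, ty_gauss hbil hsym hnd hq]
      _ = τ * Δ ^ 5 := by rw [inv_mul_cancel₀ hcard, mul_one]
  have hfin : τ ^ 2 * Δ ^ 7 *
      ((q (x - p) : k) * (q (p - y) : k) * ((q (p + p - x - y) : k))⁻¹ *
        ∑ a : A, (q a : k))
      = (τ * Δ ^ 5) *
        ((q (x - p) : k) * (q (p - y) : k) * ((q (p + p - x - y) : k))⁻¹) := by
    rw [← hτΔ]; ring
  rw [hfin]
  have hpx : ((q (p - x) : k)) = ((q (x - p) : k)) := by
    rw [heven (p - x), neg_sub]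
  rw [hpx]
  have k2 := ty_key2 hbil hsym hq heven p x y
  have n1 : (q (x - p) : k) ≠ 0 := Units.ne_zero _
  have n2 : (q (p - y) : k) ≠ 0 := Units.ne_zero _
  have n3 : (q (p + p - x - y) : k) ≠ 0 := Units.ne_zero _
  field_simp
  linear_combination (τ * Δ ^ 5) * k2

end aux

lemma ty_prev_update {A : Type*} [AddCommGroup A] {m : ℕ} (a : Fin m → A)
    (i : Fin m) (b : A) :
    prevEntry (Function.update a i b) i = prevEntry a i := by
  by_cases h : (i : ℕ) = 0
  · simp [prevEntry, h]
  · simp only [prevEntry, dif_neg h]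
    refine Function.update_of_ne ?_ _ _
    intro hji
    have := congrArg Fin.val hji
    simp only at this
    omega

/-- Braid relation `σ̃_{2i-1}·σ̃_{2i}·σ̃_{2i-1} = σ̃_{2i}·σ̃_{2i-1}·σ̃_{2i}` for the operators
arising from the center of a Tambara–Yamagami category. -/
theorem ty_braid_relation {k A : Type*} [Field k] [IsAlgClosed k] [CharZero k]
    [AddCommGroup A] [Fintype A] {m : ℕ}
    (χ : A → A → kˣ)
    (hbil : ∀ a b c : A, χ (a + b) c = χ a c * χ b c)
    (hsym : ∀ a b : A, χ a b = χ b a)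
    (hnd : ∀ a : A, (∀ b : A, χ a b = 1) → a = 0)
    (q : A → kˣ)
    (hq : ∀ a b : A, q (a + b) * χ a b = q a * q b)
    (heven : ∀ a : A, q a = q (-a))
    (τ Δ : k)
    (hτ : τ ^ 2 = ((Fintype.card A : k))⁻¹)
    (hΔ : Δ ^ 2 = τ * ∑ a : A, ((q a : k))⁻¹)
    (i : Fin m) :
    tyOdd q Δ i ∘ tyEven q τ Δ i ∘ tyOdd q Δ i =
      tyEven q τ Δ i ∘ tyOdd q Δ i ∘ tyEven q τ Δ i := by
  classical
  funext f a
  simp only [Function.comp_apply, tyOdd, tyEven, Function.update_self,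
    Function.update_idem, ty_prev_update]
  set p := prevEntry a i with hp
  set x := a i with hx
  have L : Δ * ((q (p - x) : k))⁻¹ *
      (τ * Δ ^ 3 * ∑ b : A, (q (x - b) : k) *
        (Δ * ((q (p - b) : k))⁻¹ * f (Function.update a i b)))
      = ∑ c : A, (τ * Δ ^ 5 * ((q (p - x) : k))⁻¹ * (q (x - c) : k) *
          ((q (p - c) : k))⁻¹) * f (Function.update a i c) := by
    simp only [Finset.mul_sum]
    exact Finset.sum_congr rfl fun c _ => by ring
  have R : τ * Δ ^ 3 * ∑ b : A, (q (x - b) : k) *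
      (Δ * ((q (p - b) : k))⁻¹ *
        (τ * Δ ^ 3 * ∑ c : A, (q (b - c) : k) * f (Function.update a i c)))
      = ∑ c : A, (τ ^ 2 * Δ ^ 7 *
          ∑ b : A, (q (x - b) : k) * ((q (p - b) : k))⁻¹ * (q (b - c) : k)) *
            f (Function.update a i c) := by
    simp only [Finset.mul_sum, Finset.sum_mul]
    rw [Finset.sum_comm]
    refine Finset.sum_congr rfl fun c _ => Finset.sum_congr rfl fun b _ => by ring
  rw [L, R]
  refine Finset.sum_congr rfl fun c _ => ?_
  rw [ty_scalar hbil hsym hnd hq heven τ Δ hτ hΔ p x c]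
end

section
/- Let G be a group acting on itself by conjugation, k a field, and α ∈ Z^3(G, k^×). Define c_{g,x} = 1 for all g,x. Then for η : G × G → k^× defined by η_g(x) = c'_{g,x}/c_{g,x} for another crossed braiding scalar c', the compatibility conditions γ'_{g,h}(x)/γ_{g,h}(x) = η_{gh}(x)/(η_g(hxh⁻¹)·η_h(x)) and μ'_g(x,y)/μ_g(x,y) = η_g(xy)/(η_g(x)·η_g(y)) imply that (μ', γ', c') and (μ, γ, c) yield equivalent braided G-crossed structures; in particular, verify the purely cocycle-level identity: if η_g(x) = c'_{g,x} and μ'_g(x,y)·c'_{g,x}·c'_{g,y} = μ_g(x,y)·c'_{g,xy} for all g,x,y, then γ'_{g,h}(x)·η_g(hxh⁻¹)·η_h(x) = γ_{g,h}(x)·η_{gh}(x). -/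
/-- Scalar-level uniqueness of the braided `G`-crossed structure on `Vec_G^α`
(Proposition 3.2): if `(μ, γ, c)` and `(μ', γ', c')` are two collections of scalars
satisfying the hexagon axioms (G-hex1), (G-hex2) for `Vec_G^α`, with `c_{g,x} = 1`, then
the natural isomorphism `η_g(x) = c'_{g,x}/c_{g,x}` satisfies
`γ'_{g,h}(x)·η_g(hxh⁻¹)·η_h(x) = γ_{g,h}(x)·η_{gh}(x)` and
`μ'_g(x,y)·η_g(x)·η_g(y) = μ_g(x,y)·η_g(xy)`, i.e. the two structures are equivalent. -/
theorem crossed_braiding_unique_up_to_equivalence {k G : Type*} [Field k] [Group G]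
    (α : G → G → G → kˣ)
    (hα : ∀ g₀ g₁ g₂ g₃ : G,
      α g₁ g₂ g₃ * (α (g₀ * g₁) g₂ g₃)⁻¹ * α g₀ (g₁ * g₂) g₃ *
        (α g₀ g₁ (g₂ * g₃))⁻¹ * α g₀ g₁ g₂ = 1)
    (μ μ' : G → G → G → kˣ) (γ γ' : G → G → G → kˣ) (c c' : G → G → kˣ)
    (hc : ∀ g x : G, c g x = 1)
    -- hexagon (G-hex1) for (μ, γ, c) and (μ', γ', c'):
    (hex1 : ∀ x y z : G,
      α x y z * c x (y * z) * α (x * y * x⁻¹) (x * z * x⁻¹) x =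
        μ x y z * c x y * c x z * α (x * y * x⁻¹) x z)
    (hex1' : ∀ x y z : G,
      α x y z * c' x (y * z) * α (x * y * x⁻¹) (x * z * x⁻¹) x =
        μ' x y z * c' x y * c' x z * α (x * y * x⁻¹) x z)
    -- hexagon (G-hex2) for (μ, γ, c) and (μ', γ', c'):
    (hex2 : ∀ x y z : G,
      γ x y z * α x y z * c y z * c x (y * z * y⁻¹) *
          α (x * y * z * y⁻¹ * x⁻¹) x y =
        c (x * y) z * α x (y * z * y⁻¹) y)
    (hex2' : ∀ x y z : G,
      γ' x y z * α x y z * c' y z * c' x (y * z * y⁻¹) *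
          α (x * y * z * y⁻¹ * x⁻¹) x y =
        c' (x * y) z * α x (y * z * y⁻¹) y) :
    (∀ g h x : G,
      γ' g h x * (c' g (h * x * h⁻¹) * (c g (h * x * h⁻¹))⁻¹) * (c' h x * (c h x)⁻¹) =
        γ g h x * (c' (g * h) x * (c (g * h) x)⁻¹)) ∧
    (∀ g x y : G,
      μ' g x y * (c' g x * (c g x)⁻¹) * (c' g y * (c g y)⁻¹) =
        μ g x y * (c' g (x * y) * (c g (x * y))⁻¹)) := by
  constructor
  · intro g h x
    have H := congrArg (Units.val) (hex2 g h x)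
    have H' := congrArg (Units.val) (hex2' g h x)
    simp only [hc, one_mul, mul_one, Units.val_mul, Units.val_one] at H H'
    simp only [hc, inv_one, mul_one]
    rw [Units.ext_iff]
    push_cast
    have hne : ((α g h x : k)) * (α (g * h * x * h⁻¹ * g⁻¹) g h : k) ≠ 0 :=
      mul_ne_zero (Units.ne_zero _) (Units.ne_zero _)
    apply mul_right_cancel₀ hne
    linear_combination H' - (c' (g * h) x : k) * H
  · intro g x y
    have H := congrArg (Units.val) (hex1 g x y)
    have H' := congrArg (Units.val) (hex1' g x y)
    simp only [hc, one_mul, mul_one, Units.val_mul, Units.val_one] at H H'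
    simp only [hc, inv_one, mul_one]
    rw [Units.ext_iff]
    push_cast
    have hne : ((α (g * x * g⁻¹) g y : k)) ≠ 0 := Units.ne_zero _
    apply mul_right_cancel₀ hne
    linear_combination (c' g (x * y) : k) * H - H'
end
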